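/- arXiv:2206.11176 — 11 statements merged into one kernel-verified Lean document; each statement's English description precedes it below -/
import Mathlib

section
/- Let V(x) = max_{c ∈ 𝒱} cᵀx be a polyhedral function with 𝒱 ⊆ ℝ^d finite, and set Vmax = max_{c ∈ 𝒱} ‖c‖_*. If ε ≥ 1, then the condition (for all x ∈ ℝ^d, V(x) ≥ (1/ε)·Vmax·‖x‖) holds if and only if (max_{x : V(x)=1} ‖x‖) / (min_{x : V(x)=1} ‖x‖) ≤ ε, i.e. V has eccentricity at most ε. -/
open scoped RealInnerProductSpace

/-- for a polyhedral function `V` with `Vmax = max_{c ∈ 𝒱} ‖c‖_*`,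
and `ε ≥ 1`, the condition `∀ x, V x ≥ (1/ε)·Vmax·‖x‖` holds iff
`(max_{V(x)=1} ‖x‖) / (min_{V(x)=1} ‖x‖) ≤ ε`, i.e. `V` has eccentricity at most `ε`.
(In Euclidean space the dual norm coincides with the norm.) -/
theorem eccentricity_iff {d : ℕ}
    (𝒱 : Finset (EuclideanSpace ℝ (Fin d))) (h𝒱 : 𝒱.Nonempty)
    (V : EuclideanSpace ℝ (Fin d) → ℝ)
    (hV : ∀ x, V x = 𝒱.sup' h𝒱 fun c => ⟪c, x⟫)
    (Vmax : ℝ) (hVmax : Vmax = 𝒱.sup' h𝒱 fun c => ‖c‖)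
    (hVmaxPos : 0 < Vmax)
    (hpos : ∀ x : EuclideanSpace ℝ (Fin d), x ≠ 0 → 0 < V x)
    (ε : ℝ) (hε : 1 ≤ ε) :
    (∀ x : EuclideanSpace ℝ (Fin d), V x ≥ ε⁻¹ * Vmax * ‖x‖) ↔
      sSup {r : ℝ | ∃ x : EuclideanSpace ℝ (Fin d), V x = 1 ∧ ‖x‖ = r} /
        sInf {r : ℝ | ∃ x : EuclideanSpace ℝ (Fin d), V x = 1 ∧ ‖x‖ = r} ≤ ε := by
  set S : Set ℝ := {r : ℝ | ∃ x : EuclideanSpace ℝ (Fin d), V x = 1 ∧ ‖x‖ = r} with hS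
  have hεpos : (0:ℝ) < ε := lt_of_lt_of_le one_pos hε
  -- upper bound: V x ≤ Vmax * ‖x‖
  have hub : ∀ x : EuclideanSpace ℝ (Fin d), V x ≤ Vmax * ‖x‖ := by
    intro x
    rw [hV]
    apply Finset.sup'_le
    intro b hb
    calc ⟪b, x⟫ ≤ ‖b‖ * ‖x‖ := real_inner_le_norm b x
      _ ≤ Vmax * ‖x‖ := by
        apply mul_le_mul_of_nonneg_right _ (norm_nonneg x)
        rw [hVmax]; exact Finset.le_sup' _ hb
  -- homogeneity
  have hhom : ∀ (t : ℝ), 0 ≤ t → ∀ x : EuclideanSpace ℝ (Fin d),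
      V (t • x) = t * V x := by
    intro t ht x
    rw [hV, hV]
    have h1 : (fun c : EuclideanSpace ℝ (Fin d) => ⟪c, t • x⟫)
        = fun c : EuclideanSpace ℝ (Fin d) => t * ⟪c, x⟫ := by
      funext c; rw [real_inner_smul_right]
    rw [h1]
    exact (Finset.comp_sup'_eq_sup'_comp (s := 𝒱) h𝒱
      (f := fun c : EuclideanSpace ℝ (Fin d) => ⟪c, x⟫)
      (g := fun r : ℝ => t * r) (fun a b => mul_max_of_nonneg a b ht)).symm
  have hV0 : V 0 = 0 := by
    have := hhom 0 le_rfl 0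
    simpa using this
  -- the element of 𝒱 achieving Vmax
  obtain ⟨c, hc𝒱, hc⟩ := Finset.exists_mem_eq_sup' h𝒱
    (fun c : EuclideanSpace ℝ (Fin d) => ‖c‖)
  have hcn : ‖c‖ = Vmax := by rw [hVmax, hc]
  have hcne : c ≠ 0 := by
    intro h; rw [h, norm_zero] at hcn; exact absurd hcn.symm (ne_of_gt hVmaxPos)
  have hVc : V c = Vmax ^ 2 := by
    apply le_antisymm
    · calc V c ≤ Vmax * ‖c‖ := hub c
        _ = Vmax ^ 2 := by rw [hcn]; ring
    · rw [hV]
      calc Vmax ^ 2 = ‖c‖ * ‖c‖ := by rw [hcn]; ring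
        _ = ⟪c, c⟫ := (real_inner_self_eq_norm_mul_norm c).symm
        _ ≤ _ := Finset.le_sup' (fun b : EuclideanSpace ℝ (Fin d) => ⟪b, c⟫) hc𝒱
  -- witness x₀ with V x₀ = 1, ‖x₀‖ = Vmax⁻¹
  have hx₀S : Vmax⁻¹ ∈ S := by
    refine ⟨(Vmax ^ 2)⁻¹ • c, ?_, ?_⟩
    · rw [hhom _ (by positivity), hVc]
      field_simp
    · rw [norm_smul, hcn, Real.norm_eq_abs, abs_of_nonneg (by positivity)]
      field_simp
  have hSne : S.Nonempty := ⟨_, hx₀S⟩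
  have hlb : ∀ r ∈ S, Vmax⁻¹ ≤ r := by
    rintro r ⟨x, hx1, rfl⟩
    have h1 : 1 ≤ Vmax * ‖x‖ := hx1 ▸ hub x
    rw [inv_le_iff_one_le_mul₀ hVmaxPos]
    linarith [h1]
  have hInf : sInf S = Vmax⁻¹ := le_antisymm (csInf_le ⟨Vmax⁻¹, hlb⟩ hx₀S)
    (le_csInf hSne hlb)
  -- boundedness of S via compactness
  have hcont : Continuous V := by
    have h2 : V = fun x : EuclideanSpace ℝ (Fin d) =>
        𝒱.sup' h𝒱 fun c => ⟪c, x⟫ := funext hV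
    have h3 : (fun x : EuclideanSpace ℝ (Fin d) => 𝒱.sup' h𝒱 fun c => ⟪c, x⟫)
        = 𝒱.sup' h𝒱 (fun c => fun x : EuclideanSpace ℝ (Fin d) => ⟪c, x⟫) := by
      funext x
      rw [Finset.sup'_apply]
    rw [h2, h3]
    exact Continuous.finset_sup' h𝒱 fun c _ => (innerSL ℝ c).continuous
  obtain ⟨z, hzs, hzmin⟩ :=
    (isCompact_sphere (0 : EuclideanSpace ℝ (Fin d)) 1).exists_isMinOn
    ⟨‖c‖⁻¹ • c, by
      simp [norm_smul, abs_of_nonneg, inv_mul_cancel₀ (norm_ne_zero_iff.2 hcne)]⟩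
    hcont.continuousOn
  have hzn : ‖z‖ = 1 := by simpa using hzs
  have hzpos : 0 < V z := hpos z (by intro h; rw [h, norm_zero] at hzn; norm_num at hzn)
  have hmlb : ∀ x : EuclideanSpace ℝ (Fin d), V z * ‖x‖ ≤ V x := by
    intro x
    rcases eq_or_ne x 0 with rfl | hx
    · simp [hV0]
    · have hxn : (0:ℝ) < ‖x‖ := norm_pos_iff.2 hx
      have hy : ‖x‖⁻¹ • x ∈ Metric.sphere (0 : EuclideanSpace ℝ (Fin d)) 1 := by
        simp [norm_smul, abs_of_nonneg (le_of_lt (inv_pos.2 hxn)),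
          inv_mul_cancel₀ hxn.ne']
      have h2 : V z ≤ V (‖x‖⁻¹ • x) := hzmin hy
      rw [hhom _ (by positivity)] at h2
      calc V z * ‖x‖ ≤ ‖x‖⁻¹ * V x * ‖x‖ :=
            mul_le_mul_of_nonneg_right h2 (norm_nonneg x)
        _ = V x := by field_simp
  have hbdd : BddAbove S := by
    refine ⟨(V z)⁻¹, ?_⟩
    rintro r ⟨x, hx1, rfl⟩
    have h1 := hmlb x
    rw [hx1] at h1
    have h3 : V z * ‖x‖ ≤ V z * (V z)⁻¹ := by
      rw [mul_inv_cancel₀ hzpos.ne']; exact h1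
    exact le_of_mul_le_mul_left h3 hzpos
  -- the key reformulation of the LHS
  have key : (∀ x : EuclideanSpace ℝ (Fin d), V x ≥ ε⁻¹ * Vmax * ‖x‖)
      ↔ ∀ r ∈ S, r ≤ ε / Vmax := by
    constructor
    · rintro h r ⟨x, hx1, rfl⟩
      have h1 : ε⁻¹ * Vmax * ‖x‖ ≤ 1 := hx1 ▸ h x
      have hεinv : ε * ε⁻¹ = 1 := mul_inv_cancel₀ hεpos.ne'
      rw [le_div_iff₀ hVmaxPos]
      nlinarith [h1, hεpos]
    · intro h x
      rcases eq_or_ne x 0 with rfl | hx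
      · simp [hV0]
      · have hVx : 0 < V x := hpos x hx
        have hy : ‖(V x)⁻¹ • x‖ ∈ S := by
          refine ⟨(V x)⁻¹ • x, ?_, rfl⟩
          rw [hhom _ (by positivity), inv_mul_cancel₀ hVx.ne']
        have h2 := h _ hy
        rw [norm_smul, Real.norm_eq_abs, abs_of_nonneg (by positivity)] at h2
        rw [inv_mul_eq_div, div_le_div_iff₀ hVx hVmaxPos] at h2
        rw [ge_iff_le]
        calc ε⁻¹ * Vmax * ‖x‖ = (‖x‖ * Vmax) / ε := by
              field_simp
          _ ≤ V x := by
              rw [div_le_iff₀ hεpos]; linarith [h2]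
  have h4 : sSup S / Vmax⁻¹ = sSup S * Vmax := by field_simp
  rw [key, hInf, h4, ← le_div_iff₀ hVmaxPos]
  constructor
  · intro h
    exact csSup_le hSne h
  · intro h r hr
    exact le_trans (le_csSup hbdd hr) h
end

section
/- For a polyhedral function V on ℝ^d, min over the level set {x : V(x) = 1} of ‖x‖ equals 1/Vmax, where Vmax = max_{c ∈ 𝒱} ‖c‖_*. -/
open scoped RealInnerProductSpace

/-- for a polyhedral function `V` (positive away from the origin),
the minimum of `‖x‖` over the level set `{x : V x = 1}` equals `1/Vmax`,
where `Vmax = max_{c ∈ 𝒱} ‖c‖_*`. (In Euclidean space the dual norm coincides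
with the norm.) -/
theorem min_norm_level_set {d : ℕ}
    (𝒱 : Finset (EuclideanSpace ℝ (Fin d))) (h𝒱 : 𝒱.Nonempty)
    (V : EuclideanSpace ℝ (Fin d) → ℝ)
    (hV : ∀ x, V x = 𝒱.sup' h𝒱 fun c => ⟪c, x⟫)
    (Vmax : ℝ) (hVmax : Vmax = 𝒱.sup' h𝒱 fun c => ‖c‖)
    (hVmaxPos : 0 < Vmax)
    (hpos : ∀ x : EuclideanSpace ℝ (Fin d), x ≠ 0 → 0 < V x) :
    IsLeast {r : ℝ | ∃ x : EuclideanSpace ℝ (Fin d), V x = 1 ∧ ‖x‖ = r}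
      (1 / Vmax) := by
  constructor
  · -- membership: take c* achieving the max, x = c*/‖c*‖²
    obtain ⟨c, hc, hceq⟩ := Finset.exists_mem_eq_sup' h𝒱 fun c => ‖c‖
    have hcn : ‖c‖ = Vmax := by rw [hVmax, hceq]
    have hcpos : 0 < ‖c‖ := hcn ▸ hVmaxPos
    refine ⟨(‖c‖ ^ 2)⁻¹ • c, ?_, ?_⟩
    · rw [hV]
      apply le_antisymm
      · apply Finset.sup'_le
        intro b hb
        calc ⟪b, (‖c‖ ^ 2)⁻¹ • c⟫ ≤ ‖b‖ * ‖(‖c‖ ^ 2)⁻¹ • c‖ := real_inner_le_norm _ _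
          _ ≤ ‖c‖ * ‖(‖c‖ ^ 2)⁻¹ • c‖ := by
              apply mul_le_mul_of_nonneg_right _ (norm_nonneg _)
              rw [hcn, hVmax]; exact Finset.le_sup' _ hb
          _ = 1 := by
              rw [norm_smul, norm_inv, Real.norm_of_nonneg (by positivity)]
              field_simp
      · refine le_trans ?_ (Finset.le_sup' _ hc)
        rw [real_inner_smul_right, real_inner_self_eq_norm_sq]
        field_simp; exact le_rfl
    · rw [norm_smul, norm_inv, Real.norm_of_nonneg (by positivity), hcn]
      field_simp
  · rintro r ⟨x, hx1, rfl⟩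
    rw [hV] at hx1
    obtain ⟨c, hc, hceq⟩ := Finset.exists_mem_eq_sup' h𝒱 fun c => ⟪c, x⟫
    have h1 : (1 : ℝ) = ⟪c, x⟫ := by rw [← hx1, hceq]
    have h2 : ⟪c, x⟫ ≤ Vmax * ‖x‖ := by
      calc ⟪c, x⟫ ≤ ‖c‖ * ‖x‖ := real_inner_le_norm _ _
        _ ≤ Vmax * ‖x‖ := by
            apply mul_le_mul_of_nonneg_right _ (norm_nonneg _)
            rw [hVmax]; exact Finset.le_sup' _ hc
    rw [div_le_iff₀ hVmaxPos]
    linarith [h1, h2]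
end

section
/- Let V be a polyhedral function with Vmax = 1 and eccentricity ε, i.e., V(x) ≥ (1/ε)‖x‖ for all x. Suppose that for every γ-perturbation ℱ' of ℱ, V satisfies cᵀv' ≤ 0 for all x, v' ∈ ℱ'(x), c ∈ 𝒱(x). Then for all x ∈ ℝ^d, v ∈ ℱ(x) and c ∈ 𝒱(x), it holds cᵀv ≤ −(γ·a_max/ε)·‖x‖. -/
open scoped RealInnerProductSpace

/-- if a polyhedral function `V` with `Vmax = 1` and eccentricity `ε`
(i.e. `V x ≥ (1/ε)‖x‖` for all `x`) is such that `cᵀv' ≤ 0` for all `x`,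
`v' ∈ ℱ'(x)`, `c ∈ 𝒱(x)` for every `γ`-perturbation `ℱ'` of `ℱ`, then
`cᵀv ≤ −(γ·a_max/ε)·‖x‖` for all `x`, `v ∈ ℱ(x)`, `c ∈ 𝒱(x)`. -/
theorem perturbed_lyapunov_implies_margin {d : ℕ} {Q : Type*} [Fintype Q] [Nonempty Q]
    (A : Q → EuclideanSpace ℝ (Fin d) →L[ℝ] EuclideanSpace ℝ (Fin d))
    (amax : ℝ) (hamax : amax = Finset.univ.sup' Finset.univ_nonempty fun q : Q => ‖A q‖)
    (𝒱 : Finset (EuclideanSpace ℝ (Fin d))) (h𝒱 : 𝒱.Nonempty)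
    (V : EuclideanSpace ℝ (Fin d) → ℝ)
    (hV : ∀ x, V x = 𝒱.sup' h𝒱 fun c => ⟪c, x⟫)
    (hVmax : (𝒱.sup' h𝒱 fun c => ‖c‖) = 1)
    (ε : ℝ) (hε : 1 ≤ ε) (γ : ℝ) (hγ : 0 < γ)
    -- eccentricity ε
    (hecc : ∀ x : EuclideanSpace ℝ (Fin d), V x ≥ ε⁻¹ * ‖x‖)
    -- `V` is a Lyapunov function (in the weak sense `cᵀv' ≤ 0`) for every
    -- γ-perturbation of the system
    (hrob : ∀ A' : Q → EuclideanSpace ℝ (Fin d) →L[ℝ] EuclideanSpace ℝ (Fin d),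
      (∀ q : Q, ‖A' q - A q‖ ≤ γ * amax) →
      ∀ x : EuclideanSpace ℝ (Fin d), ∀ q : Q, ∀ c ∈ 𝒱,
        ⟪c, x⟫ = V x → ⟪c, A' q x⟫ ≤ 0) :
    ∀ x : EuclideanSpace ℝ (Fin d), ∀ q : Q, ∀ c ∈ 𝒱,
      ⟪c, x⟫ = V x → ⟪c, A q x⟫ ≤ -(γ * amax / ε) * ‖x‖ := by
  classical
  intro x q c hc hcx
  have hamax0 : 0 ≤ amax := by
    have h1 : ‖A q‖ ≤ Finset.univ.sup' Finset.univ_nonempty fun q : Q => ‖A q‖ :=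
      Finset.le_sup' (fun q : Q => ‖A q‖) (Finset.mem_univ q)
    rw [hamax]
    exact le_trans (norm_nonneg (A q)) h1
  rcases eq_or_ne x 0 with rfl | hx
  · simp
  have hxn : (0:ℝ) < ‖x‖ := norm_pos_iff.mpr hx
  have hεpos : (0:ℝ) < ε := lt_of_lt_of_le one_pos hε
  have hVx : ε⁻¹ * ‖x‖ ≤ ⟪c, x⟫ := by rw [hcx]; exact hecc x
  have hcs := real_inner_le_norm c x
  have hcε : ε⁻¹ ≤ ‖c‖ := by
    have h2 : ε⁻¹ * ‖x‖ ≤ ‖c‖ * ‖x‖ := le_trans hVx hcs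
    exact le_of_mul_le_mul_right h2 hxn
  have hcpos : (0:ℝ) < ‖c‖ := lt_of_lt_of_le (inv_pos.mpr hεpos) hcε
  set t : ℝ := γ * amax / (‖x‖ * ‖c‖) with ht
  have htn : 0 ≤ t := by positivity
  set P : EuclideanSpace ℝ (Fin d) →L[ℝ] EuclideanSpace ℝ (Fin d) :=
    (innerSL ℝ x).smulRight c with hP
  have hPnorm : ‖P‖ = ‖x‖ * ‖c‖ := by
    rw [hP, ContinuousLinearMap.norm_smulRight_apply, innerSL_apply_norm]
  set A' := Function.update A q (A q + t • P) with hA'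
  have hA'q : A' q = A q + t • P := Function.update_self _ _ _
  have hbound : ∀ q', ‖A' q' - A q'‖ ≤ γ * amax := by
    intro q'
    rcases eq_or_ne q' q with rfl | h
    · rw [hA'q, add_sub_cancel_left]
      have h1 : ‖t • P‖ = t * (‖x‖ * ‖c‖) := by
        have h2 : ‖t • P‖ = ‖t‖ * ‖P‖ := norm_smul t P
        rw [h2, hPnorm, Real.norm_eq_abs, abs_of_nonneg htn]
      rw [h1, ht, div_mul_cancel₀]
      positivity
    · rw [hA', Function.update_of_ne h, sub_self, norm_zero]
      positivity
  have key := hrob A' hbound x q c hc hcx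
  rw [hA'q] at key
  have hPx : ⟪c, P x⟫ = ⟪x, x⟫ * ⟪c, c⟫ := by
    rw [hP, ContinuousLinearMap.smulRight_apply, innerSL_apply_apply, real_inner_smul_right]
  have hexp : ⟪c, (A q + t • P) x⟫ = ⟪c, A q x⟫ + t * (⟪x, x⟫ * ⟪c, c⟫) := by
    rw [ContinuousLinearMap.add_apply, ContinuousLinearMap.smul_apply, inner_add_right,
      real_inner_smul_right, hPx]
  rw [hexp] at key
  have hxx : ⟪x, x⟫ = ‖x‖ ^ 2 := real_inner_self_eq_norm_sq x
  have hcc : ⟪c, c⟫ = ‖c‖ ^ 2 := real_inner_self_eq_norm_sq c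
  have hval : t * (⟪x, x⟫ * ⟪c, c⟫) = γ * amax * ‖x‖ * ‖c‖ := by
    rw [hxx, hcc, ht]
    field_simp
    try ring
  rw [hval] at key
  have h1 : ⟪c, A q x⟫ ≤ -(γ * amax * ‖x‖ * ‖c‖) := by linarith
  have h2 : γ * amax / ε * ‖x‖ ≤ γ * amax * ‖x‖ * ‖c‖ := by
    have : γ * amax / ε * ‖x‖ = γ * amax * ‖x‖ * ε⁻¹ := by
      field_simp
      try ring
    rw [this]
    have hga : 0 ≤ γ * amax * ‖x‖ := by positivity
    exact mul_le_mul_of_nonneg_left hcε hga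
  linarith
end

section
/- Let V be a polyhedral function, x ∈ ℝ^d with ‖x‖ > 0, c ∈ 𝒱 with V(x) > cᵀx, v ∈ ℝ^d, and η > 0. Set s = (2/(η‖x‖))·(V(x) − cᵀx) > 0, y = x + s·v, and let c_y ∈ 𝒱(y). Then cᵀv ≤ c_yᵀv + (η/2)‖x‖. -/
open scoped RealInnerProductSpace

/-- Lemma `cv ≤ c_y v + η/2 ‖x‖`: for a polyhedral function `V`,
`x` with `‖x‖ > 0`, `c ∈ 𝒱` with `V x > cᵀx`, `v`, `η > 0`,
`s = (2/(η‖x‖))(V x − cᵀx)`, `y = x + s•v` and `c_y ∈ 𝒱(y)`, one has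
`cᵀv ≤ c_yᵀv + (η/2)‖x‖`. -/
theorem cv_le_cyv {d : ℕ}
    (𝒱 : Finset (EuclideanSpace ℝ (Fin d))) (h𝒱 : 𝒱.Nonempty)
    (V : EuclideanSpace ℝ (Fin d) → ℝ)
    (hV : ∀ x, V x = 𝒱.sup' h𝒱 fun c => ⟪c, x⟫)
    (x v : EuclideanSpace ℝ (Fin d)) (hx : 0 < ‖x‖)
    (c : EuclideanSpace ℝ (Fin d)) (hc : c ∈ 𝒱) (hcx : ⟪c, x⟫ < V x)
    (η : ℝ) (hη : 0 < η)
    (s : ℝ) (hs : s = 2 / (η * ‖x‖) * (V x - ⟪c, x⟫))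
    (y : EuclideanSpace ℝ (Fin d)) (hy : y = x + s • v)
    (cy : EuclideanSpace ℝ (Fin d)) (hcy : cy ∈ 𝒱) (hcyy : ⟪cy, y⟫ = V y) :
    ⟪c, v⟫ ≤ ⟪cy, v⟫ + η / 2 * ‖x‖ := by
  have hs0 : 0 < s := by
    rw [hs]
    apply mul_pos (by positivity) (by linarith)
  have hcyx : ⟪cy, x⟫ ≤ V x := by
    rw [hV x]; exact Finset.le_sup' (fun c => ⟪c, x⟫) hcy
  have hcyv : ⟪c, y⟫ ≤ ⟪cy, y⟫ := by
    rw [hcyy, hV y]; exact Finset.le_sup' (fun c => ⟪c, y⟫) hc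
  have hiy : ∀ w : EuclideanSpace ℝ (Fin d), ⟪w, y⟫ = ⟪w, x⟫ + s * ⟪w, v⟫ := by
    intro w
    rw [hy, inner_add_right, real_inner_smul_right]
  have hse : s * (η / 2 * ‖x‖) = V x - ⟪c, x⟫ := by
    rw [hs]
    field_simp
  have key : s * ⟪c, v⟫ ≤ s * (⟪cy, v⟫ + η / 2 * ‖x‖) := by
    have h1 := hcyv
    rw [hiy c, hiy cy] at h1
    nlinarith [hcyx, hse]
  exact le_of_mul_le_mul_left key hs0
end

section
/- If system ℱ admits an (ε,θ,δ)-robust polyhedral Lyapunov function, then for any finite witness set X ⊆ ℝ^d, the learner's Problem is feasible: there exists an assignment x ↦ c_x ∈ 𝔹^* (the dual unit ball) for x ∈ X such that (i) c_xᵀx ≥ (1/ε)‖x‖ for all x ∈ X, and (ii) for all x ∈ X, v ∈ ℱ(x) and all y ∈ X, c_yᵀv ≤ (1/θ)(c_xᵀx − c_yᵀx) − δ‖x‖. -/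
open scoped RealInnerProductSpace

/-- feasibility of the learner's problem: if the system
`ℱ(x) = {A_q x : q ∈ Q, x ∈ H_q}` admits an `(ε,θ,δ)`-robust polyhedral
Lyapunov function (with coefficients in the dual unit ball and `Vmax = 1`),
then for any finite witness set `X` there is an assignment `x ↦ c_x ∈ 𝔹^*`
satisfying the learner's constraints (i) and (ii). -/
theorem learner_feasible {d : ℕ} {Q : Type*}
    (H : Q → Set (EuclideanSpace ℝ (Fin d)))
    (A : Q → EuclideanSpace ℝ (Fin d) →L[ℝ] EuclideanSpace ℝ (Fin d))
    (ε θ δ : ℝ)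
    -- the system admits an (ε,θ,δ)-robust polyhedral Lyapunov function
    (hrobust : ∃ (𝒱 : Finset (EuclideanSpace ℝ (Fin d))) (h𝒱 : 𝒱.Nonempty),
      (∀ c ∈ 𝒱, ‖c‖ ≤ 1) ∧
      ((𝒱.sup' h𝒱 fun c => ‖c‖) = 1) ∧
      (∀ x : EuclideanSpace ℝ (Fin d),
        (𝒱.sup' h𝒱 fun c => ⟪c, x⟫) ≥ ε⁻¹ * ‖x‖) ∧
      (∀ x : EuclideanSpace ℝ (Fin d), ∀ q : Q, x ∈ H q → ∀ c ∈ 𝒱,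
        ⟪c, A q x⟫ ≤ θ⁻¹ * ((𝒱.sup' h𝒱 fun b => ⟪b, x⟫) - ⟪c, x⟫) - δ * ‖x‖))
    (X : Finset (EuclideanSpace ℝ (Fin d))) :
    ∃ cc : EuclideanSpace ℝ (Fin d) → EuclideanSpace ℝ (Fin d),
      ∀ x ∈ X, ‖cc x‖ ≤ 1 ∧ ⟪cc x, x⟫ ≥ ε⁻¹ * ‖x‖ ∧
        ∀ q : Q, x ∈ H q → ∀ y ∈ X,
          ⟪cc y, A q x⟫ ≤ θ⁻¹ * (⟪cc x, x⟫ - ⟪cc y, x⟫) - δ * ‖x‖ := by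
  obtain ⟨𝒱, h𝒱, hball, _, hD1, hD2⟩ := hrobust
  have hch : ∀ x : EuclideanSpace ℝ (Fin d), ∃ c ∈ 𝒱,
      (𝒱.sup' h𝒱 fun c => ⟪c, x⟫) = ⟪c, x⟫ := fun x =>
    Finset.exists_mem_eq_sup' h𝒱 (fun c => ⟪c, x⟫)
  choose cc hmem hsup using hch
  refine ⟨cc, fun x hx => ⟨hball _ (hmem x), ?_, fun q hq y _ => ?_⟩⟩
  · rw [← hsup x]; exact hD1 x
  · have := hD2 x q hq (cc y) (hmem y)
    rwa [hsup x] at this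
end

section
/- Fix ε ≥ 1, θ > 0, δ > 0 and let r̄ = min{1/ε, θδ/(2 + θ·a_max)}. Let X ⊆ 𝕊 (unit sphere) be finite and let V (with pieces {c_x}_{x∈X} ⊆ 𝔹^*) satisfy the learner constraints: c_xᵀx ≥ 1/ε and cᵀ(A_q x) ≤ (1/θ)(c_xᵀx − cᵀx) − δ for all x ∈ X ∩ H_q, q ∈ Q, c ∈ 𝒱. If X' ⊆ 𝕊 is an r̄-inflation of X (for all q ∈ Q and x' ∈ X' ∩ H_q there is x ∈ X ∩ H_q with ‖x − x'‖ < r̄), then for every x' ∈ X': (i) V(x') > 0, and (ii) for all q with x' ∈ H_q and all c ∈ 𝒱(x'), cᵀA_q x' < 0. -/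
open scoped RealInnerProductSpace

/-- robustness w.r.t. inflation of the witness set: if `V` with
pieces `{c_x}_{x∈X} ⊆ 𝔹^*` satisfies the learner constraints on the witness
set `X ⊆ 𝕊`, and `X' ⊆ 𝕊` is an `r̄`-inflation of `X` with
`r̄ = min{1/ε, θδ/(2 + θ a_max)}`, then for every `x' ∈ X'`: (i) `V x' > 0`,
and (ii) for all `q` with `x' ∈ H_q` and all `c ∈ 𝒱(x')`, `cᵀA_q x' < 0`. -/
theorem inflation_robustness {d : ℕ} [DecidableEq (EuclideanSpace ℝ (Fin d))] {Q : Type*} [Fintype Q] [Nonempty Q]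
    (H : Q → Set (EuclideanSpace ℝ (Fin d)))
    (hcover : ∀ x : EuclideanSpace ℝ (Fin d), ∃ q : Q, x ∈ H q)
    (A : Q → EuclideanSpace ℝ (Fin d) →L[ℝ] EuclideanSpace ℝ (Fin d))
    (amax : ℝ) (hamax : amax = Finset.univ.sup' Finset.univ_nonempty fun q : Q => ‖A q‖)
    (ε θ δ : ℝ) (hε : 1 ≤ ε) (hθ : 0 < θ) (hδ : 0 < δ)
    (rbar : ℝ) (hrbar : rbar = min ε⁻¹ (θ * δ / (2 + θ * amax)))
    (X : Finset (EuclideanSpace ℝ (Fin d))) (hX : X.Nonempty)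
    (hXS : ∀ x ∈ X, ‖x‖ = 1)
    (cc : EuclideanSpace ℝ (Fin d) → EuclideanSpace ℝ (Fin d))
    (𝒱 : Finset (EuclideanSpace ℝ (Fin d))) (h𝒱 : 𝒱 = X.image cc)
    (hball : ∀ c ∈ 𝒱, ‖c‖ ≤ 1)
    -- learner constraints
    (hlearn : ∀ x ∈ X, ⟪cc x, x⟫ ≥ ε⁻¹ ∧
      ∀ q : Q, x ∈ H q → ∀ c ∈ 𝒱, ⟪c, A q x⟫ ≤ θ⁻¹ * (⟪cc x, x⟫ - ⟪c, x⟫) - δ)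
    (V : EuclideanSpace ℝ (Fin d) → ℝ)
    (hV : ∀ z, V z = (X.image cc).sup' (hX.image cc) fun c => ⟪c, z⟫)
    -- `X'` is an `r̄`-inflation of `X`
    (X' : Finset (EuclideanSpace ℝ (Fin d))) (hXX' : X ⊆ X')
    (hX'S : ∀ x' ∈ X', ‖x'‖ = 1)
    (hinfl : ∀ q : Q, ∀ x' ∈ X', x' ∈ H q → ∃ x ∈ X, x ∈ H q ∧ ‖x - x'‖ < rbar) :
    ∀ x' ∈ X', 0 < V x' ∧
      ∀ q : Q, x' ∈ H q → ∀ c ∈ 𝒱, ⟪c, x'⟫ = V x' → ⟪c, A q x'⟫ < 0 := by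
  have hamax0 : 0 ≤ amax := by
    obtain ⟨q⟩ := ‹Nonempty Q›
    have := Finset.le_sup' (fun q : Q => ‖A q‖) (Finset.mem_univ q)
    rw [hamax]; exact le_trans (norm_nonneg _) this
  have hrbar1 : rbar ≤ ε⁻¹ := by rw [hrbar]; exact min_le_left _ _
  have hrbar2 : rbar * (2 + θ * amax) ≤ θ * δ := by
    have hden : 0 < 2 + θ * amax := by nlinarith
    have : rbar ≤ θ * δ / (2 + θ * amax) := by rw [hrbar]; exact min_le_right _ _
    calc rbar * (2 + θ * amax) ≤ (θ * δ / (2 + θ * amax)) * (2 + θ * amax) := by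
          exact mul_le_mul_of_nonneg_right this hden.le
      _ = θ * δ := by field_simp
  -- generic inner product bound for c ∈ 𝒱
  have hcb : ∀ c ∈ 𝒱, ∀ u : EuclideanSpace ℝ (Fin d), ⟪c, u⟫ ≤ ‖u‖ := by
    intro c hc u
    calc ⟪c, u⟫ ≤ ‖c‖ * ‖u‖ := real_inner_le_norm c u
      _ ≤ 1 * ‖u‖ := mul_le_mul_of_nonneg_right (hball c hc) (norm_nonneg u)
      _ = ‖u‖ := one_mul _
  intro x' hx'
  -- part (i)
  have key : ∀ q : Q, x' ∈ H q → ∃ x ∈ X, x ∈ H q ∧ ‖x - x'‖ < rbar ∧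
      0 < ⟪cc x, x'⟫ := by
    intro q hq
    obtain ⟨x, hxX, hxH, hxr⟩ := hinfl q x' hx' hq
    refine ⟨x, hxX, hxH, hxr, ?_⟩
    have hccx : cc x ∈ 𝒱 := by rw [h𝒱]; exact Finset.mem_image_of_mem cc hxX
    have h1 : ⟪cc x, x⟫ ≥ ε⁻¹ := (hlearn x hxX).1
    have h2 : ⟪cc x, x - x'⟫ ≤ ‖x - x'‖ := hcb _ hccx _
    have h3 : ⟪cc x, x - x'⟫ = ⟪cc x, x⟫ - ⟪cc x, x'⟫ := inner_sub_right _ _ _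
    linarith
  obtain ⟨q0, hq0⟩ := hcover x'
  obtain ⟨x0, hx0X, _, _, hx0pos⟩ := key q0 hq0
  have hVpos : 0 < V x' := by
    rw [hV]
    exact lt_of_lt_of_le hx0pos
      (Finset.le_sup' (fun c => ⟪c, x'⟫) (Finset.mem_image_of_mem cc hx0X))
  refine ⟨hVpos, ?_⟩
  -- part (ii)
  intro q hq c hc hcV
  obtain ⟨x, hxX, hxH, hxr, hpos⟩ := key q hq
  have hccx : cc x ∈ 𝒱 := by rw [h𝒱]; exact Finset.mem_image_of_mem cc hxX
  -- ⟪c, x'⟫ = V x' ≥ ⟪cc x, x'⟫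
  have hVge : ⟪cc x, x'⟫ ≤ ⟪c, x'⟫ := by
    rw [hcV, hV]
    exact Finset.le_sup' (fun c => ⟪c, x'⟫) (Finset.mem_image_of_mem cc hxX)
  -- perturbation bounds
  have h2 : ⟪cc x, x - x'⟫ ≤ ‖x - x'‖ := hcb _ hccx _
  have h2' : ⟪cc x, x - x'⟫ = ⟪cc x, x⟫ - ⟪cc x, x'⟫ := inner_sub_right _ _ _
  have h3 : ⟪c, x' - x⟫ ≤ ‖x' - x‖ := hcb _ hc _
  have h3' : ⟪c, x' - x⟫ = ⟪c, x'⟫ - ⟪c, x⟫ := inner_sub_right _ _ _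
  have hnx : ‖x' - x‖ = ‖x - x'‖ := by rw [← norm_neg]; congr 1; abel
  -- gap bound: ⟪cc x, x⟫ - ⟪c, x⟫ < 2 * rbar
  have hgap : ⟪cc x, x⟫ - ⟪c, x⟫ < 2 * rbar := by
    have := hnx ▸ h3
    linarith
  have hlq : ⟪c, A q x⟫ ≤ θ⁻¹ * (⟪cc x, x⟫ - ⟪c, x⟫) - δ := (hlearn x hxX).2 q hxH c hc
  -- ⟪c, A q x'⟫ ≤ ⟪c, A q x⟫ + ‖A q‖ * ‖x' - x‖
  have hA : ⟪c, A q (x' - x)⟫ ≤ amax * rbar := by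
    have h5 : ‖A q (x' - x)‖ ≤ ‖A q‖ * ‖x' - x‖ := (A q).le_opNorm _
    have h6 : ‖A q‖ ≤ amax := by
      rw [hamax]; exact Finset.le_sup' (fun q : Q => ‖A q‖) (Finset.mem_univ q)
    have h7 : ‖x' - x‖ ≤ rbar := by rw [hnx]; exact hxr.le
    calc ⟪c, A q (x' - x)⟫ ≤ ‖A q (x' - x)‖ := hcb _ hc _
      _ ≤ ‖A q‖ * ‖x' - x‖ := h5
      _ ≤ amax * rbar := by
          exact mul_le_mul h6 h7 (norm_nonneg _) hamax0
  have hsplit : ⟪c, A q x'⟫ = ⟪c, A q x⟫ + ⟪c, A q (x' - x)⟫ := by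
    rw [← inner_add_right]
    congr 1
    rw [← map_add]
    congr 1
    abel
  have hθi : θ⁻¹ * (⟪cc x, x⟫ - ⟪c, x⟫) < θ⁻¹ * (2 * rbar) :=
    mul_lt_mul_of_pos_left hgap (inv_pos.mpr hθ)
  have hfinal : θ⁻¹ * (2 * rbar) + amax * rbar ≤ δ := by
    have h8 : θ⁻¹ * (θ * δ) = δ := by field_simp
    have h9 : θ⁻¹ * (rbar * (2 + θ * amax)) ≤ θ⁻¹ * (θ * δ) :=
      mul_le_mul_of_nonneg_left hrbar2 (inv_pos.mpr hθ).le
    have h10 : θ⁻¹ * (rbar * (2 + θ * amax)) = θ⁻¹ * (2 * rbar) + amax * rbar := by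
      field_simp
    linarith
  linarith [hsplit, hlq, hA]
end

section
/- Fix ε ≥ 1, θ > 0, δ > 0 and let r̄ = min{1/ε, θδ/(2 + θ·a_max)}. Let X ⊆ 𝕊 be finite and V (pieces {c_x}_{x∈X} ⊆ 𝔹^*) satisfy the learner constraints: c_xᵀx ≥ 1/ε and cᵀv ≤ (1/θ)(c_xᵀx − cᵀx) − δ for all x ∈ X, v ∈ ℱ(x), c ∈ 𝒱. Let V' be a polyhedral function with coefficient set 𝒱' that is r̄-close to V (each c ∈ 𝒱 has some c' ∈ 𝒱' with ‖c − c'‖_* < r̄ and vice versa). Then for all x ∈ X: (i) V'(x) > 0, and (ii) for all v ∈ ℱ(x) and c' ∈ 𝒱'(x), c'ᵀv < 0. -/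
open scoped RealInnerProductSpace

/-- robustness w.r.t. perturbation of the candidate function: if
`V` with pieces `{c_x}_{x∈X} ⊆ 𝔹^*` satisfies the learner constraints on the
witness set `X ⊆ 𝕊`, and `V'` (with coefficient set `𝒱'`) is `r̄`-close to `V`
with `r̄ = min{1/ε, θδ/(2 + θ a_max)}`, then for every `x ∈ X`: (i) `V' x > 0`,
and (ii) for all `v ∈ ℱ(x)` and `c' ∈ 𝒱'(x)`, `c'ᵀv < 0`. -/
theorem close_candidate_robustness {d : ℕ} [DecidableEq (EuclideanSpace ℝ (Fin d))]
    {Q : Type*} [Fintype Q] [Nonempty Q]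
    (H : Q → Set (EuclideanSpace ℝ (Fin d)))
    (A : Q → EuclideanSpace ℝ (Fin d) →L[ℝ] EuclideanSpace ℝ (Fin d))
    (amax : ℝ) (hamax : amax = Finset.univ.sup' Finset.univ_nonempty fun q : Q => ‖A q‖)
    (ε θ δ : ℝ) (hε : 1 ≤ ε) (hθ : 0 < θ) (hδ : 0 < δ)
    (rbar : ℝ) (hrbar : rbar = min ε⁻¹ (θ * δ / (2 + θ * amax)))
    (X : Finset (EuclideanSpace ℝ (Fin d))) (hX : X.Nonempty)
    (hXS : ∀ x ∈ X, ‖x‖ = 1)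
    (cc : EuclideanSpace ℝ (Fin d) → EuclideanSpace ℝ (Fin d))
    (𝒱 : Finset (EuclideanSpace ℝ (Fin d))) (h𝒱 : 𝒱 = X.image cc)
    (hball : ∀ c ∈ 𝒱, ‖c‖ ≤ 1)
    -- learner constraints
    (hlearn : ∀ x ∈ X, ⟪cc x, x⟫ ≥ ε⁻¹ ∧
      ∀ q : Q, x ∈ H q → ∀ c ∈ 𝒱, ⟪c, A q x⟫ ≤ θ⁻¹ * (⟪cc x, x⟫ - ⟪c, x⟫) - δ)
    -- the perturbed polyhedral function `V'`
    (𝒱' : Finset (EuclideanSpace ℝ (Fin d))) (h𝒱' : 𝒱'.Nonempty)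
    (V' : EuclideanSpace ℝ (Fin d) → ℝ)
    (hV' : ∀ z, V' z = 𝒱'.sup' h𝒱' fun c' => ⟪c', z⟫)
    -- `V` and `V'` are `r̄`-close
    (hclose₁ : ∀ c ∈ 𝒱, ∃ c' ∈ 𝒱', ‖c - c'‖ < rbar)
    (hclose₂ : ∀ c' ∈ 𝒱', ∃ c ∈ 𝒱, ‖c - c'‖ < rbar) :
    ∀ x ∈ X, 0 < V' x ∧
      ∀ q : Q, x ∈ H q → ∀ c' ∈ 𝒱', ⟪c', x⟫ = V' x → ⟪c', A q x⟫ < 0 := by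

  have hamax0 : 0 ≤ amax := by
    rw [hamax]
    exact le_trans (norm_nonneg _) (Finset.le_sup' (fun q => ‖A q‖) (Finset.mem_univ (Classical.arbitrary Q)))
  have hεpos : (0:ℝ) < ε⁻¹ := by positivity
  have hrle1 : rbar ≤ ε⁻¹ := hrbar ▸ min_le_left _ _
  have hrle2 : rbar ≤ θ * δ / (2 + θ * amax) := hrbar ▸ min_le_right _ _
  have hden : (0:ℝ) < 2 + θ * amax := by positivity
  have hr2 : rbar * (2 + θ * amax) ≤ θ * δ := by
    rw [← le_div_iff₀ hden]; exact hrle2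
  intro x hx
  have hxn : ‖x‖ = 1 := hXS x hx
  have hcc𝒱 : cc x ∈ 𝒱 := by rw [h𝒱]; exact Finset.mem_image_of_mem _ hx
  obtain ⟨hεx, hlearn2⟩ := hlearn x hx
  obtain ⟨c₀, hc₀, hc₀r⟩ := hclose₁ (cc x) hcc𝒱
  have h1 : ⟪cc x, x⟫ - ⟪c₀, x⟫ < rbar := by
    have h := real_inner_le_norm (cc x - c₀) x
    rw [inner_sub_left] at h
    calc ⟪cc x, x⟫ - ⟪c₀, x⟫ ≤ ‖cc x - c₀‖ * ‖x‖ := h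
      _ = ‖cc x - c₀‖ := by rw [hxn, mul_one]
      _ < rbar := hc₀r
  have hV'ge : ⟪c₀, x⟫ ≤ V' x := by
    rw [hV' x]; exact Finset.le_sup' (fun c' => ⟪c', x⟫) hc₀
  have hV'pos : 0 < V' x := by linarith
  refine ⟨hV'pos, ?_⟩
  intro q hq c' hc' hmax
  obtain ⟨c, hc, hcr⟩ := hclose₂ c' hc'
  have hrnn : 0 ≤ rbar := le_trans (norm_nonneg _) hcr.le
  have hAx : ‖A q x‖ ≤ amax := by
    calc ‖A q x‖ ≤ ‖A q‖ * ‖x‖ := (A q).le_opNorm x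
      _ = ‖A q‖ := by rw [hxn, mul_one]
      _ ≤ amax := hamax ▸ Finset.le_sup' (fun q => ‖A q‖) (Finset.mem_univ q)
  have h2 : ⟪c', A q x⟫ - ⟪c, A q x⟫ ≤ rbar * amax := by
    have h := real_inner_le_norm (c' - c) (A q x)
    rw [inner_sub_left] at h
    calc ⟪c', A q x⟫ - ⟪c, A q x⟫ ≤ ‖c' - c‖ * ‖A q x‖ := h
      _ ≤ rbar * amax := by
        apply mul_le_mul _ hAx (norm_nonneg _) hrnn
        rw [norm_sub_rev]; exact hcr.le
  have h3 : ⟪c', x⟫ - ⟪c, x⟫ < rbar := by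
    have h := real_inner_le_norm (c' - c) x
    rw [inner_sub_left] at h
    calc ⟪c', x⟫ - ⟪c, x⟫ ≤ ‖c' - c‖ * ‖x‖ := h
      _ = ‖c' - c‖ := by rw [hxn, mul_one]
      _ < rbar := by rw [norm_sub_rev]; exact hcr
  have h4 : ⟪cc x, x⟫ - ⟪c, x⟫ < 2 * rbar := by
    have : ⟪c', x⟫ = V' x := hmax
    linarith
  have hlc := hlearn2 q hq c hc
  have hθinv : (0:ℝ) < θ⁻¹ := by positivity
  have h5 : θ⁻¹ * (⟪cc x, x⟫ - ⟪c, x⟫) < θ⁻¹ * (2 * rbar) :=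
    mul_lt_mul_of_pos_left h4 hθinv
  have h6 : θ⁻¹ * (2 * rbar) + rbar * amax ≤ δ := by
    have hθne : θ ≠ 0 := ne_of_gt hθ
    have heq : θ⁻¹ * (2 * rbar) + rbar * amax = (rbar * (2 + θ * amax)) / θ := by
      field_simp
    rw [heq, div_le_iff₀ hθ]
    nlinarith
  linarith
end

section
/- Consider the planar system ẋ ∈ {A₁x if x₂ ≥ 0, A₂x if x₂ ≤ 0} with A₁ = [[−0.2, 1.0], [−1.0, −0.2]] and A₂ = [[0.01, 1.0], [−1.0, 0.01]]. There is no polynomial function V : ℝ² → ℝ that is a Lyapunov function for this system (positive definite, radially unbounded, and strictly decreasing along all nonzero trajectories). -/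
/-- Mode-1 vector field `A₁x` with `A₁ = [[−0.2, 1], [−1, −0.2]]`. -/
noncomputable def stmt13A1 (x : EuclideanSpace ℝ (Fin 2)) : EuclideanSpace ℝ (Fin 2) :=
  WithLp.toLp 2 ![(-0.2) * x 0 + 1.0 * x 1, (-1.0) * x 0 + (-0.2) * x 1]

/-- Mode-2 vector field `A₂x` with `A₂ = [[0.01, 1], [−1, 0.01]]`. -/
noncomputable def stmt13A2 (x : EuclideanSpace ℝ (Fin 2)) : EuclideanSpace ℝ (Fin 2) :=
  WithLp.toLp 2 ![0.01 * x 0 + 1.0 * x 1, (-1.0) * x 0 + 0.01 * x 1]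

open MeasureTheory Filter Real Polynomial

noncomputable def hfun : ℝ → ℝ := fun s => if 0 ≤ Real.sin s then 0.01 else -0.2
noncomputable def gfun : ℝ → ℝ := fun t => ∫ s in (0:ℝ)..t, hfun s

lemma hfun_meas : Measurable hfun :=
  Measurable.ite (measurableSet_le measurable_const Real.continuous_sin.measurable)
    measurable_const measurable_const

lemma hfun_intint (a b : ℝ) : IntervalIntegrable hfun volume a b := by
  rw [intervalIntegrable_iff]
  refine MeasureTheory.Integrable.mono' (g := fun _ => (1:ℝ))
    (integrableOn_const measure_Ioc_lt_top.ne)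
    hfun_meas.aestronglyMeasurable.restrict ?_
  filter_upwards with s
  unfold hfun; split <;> norm_num

lemma gfun_cont : Continuous gfun := intervalIntegral.continuous_primitive hfun_intint 0

lemma gfun_deriv {t : ℝ} (ht : Real.sin t ≠ 0) : HasDerivAt gfun (hfun t) t := by
  refine intervalIntegral.integral_hasDerivAt_right (hfun_intint 0 t)
    (hfun_meas.stronglyMeasurable.stronglyMeasurableAtFilter) ?_
  rcases ht.lt_or_gt with h | h
  · have hev : ∀ᶠ s in nhds t, Real.sin s < 0 :=
      (isOpen_lt Real.continuous_sin continuous_const).eventually_mem h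
    have heq : hfun =ᶠ[nhds t] fun _ => (-0.2 : ℝ) := by
      filter_upwards [hev] with s hs; simp [hfun, not_le.2 hs]
    exact heq.continuousAt
  · have hev : ∀ᶠ s in nhds t, 0 < Real.sin s :=
      (isOpen_lt continuous_const Real.continuous_sin).eventually_mem h
    have heq : hfun =ᶠ[nhds t] fun _ => (0.01 : ℝ) := by
      filter_upwards [hev] with s hs; simp [hfun, hs.le]
    exact heq.continuousAt

lemma gfun_zero : gfun 0 = 0 := intervalIntegral.integral_same

lemma gfun_pi : gfun Real.pi = 0.01 * Real.pi := by
  unfold gfun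
  rw [intervalIntegral.integral_congr (g := fun _ => (0.01:ℝ))
    (fun s hs => by
      rw [Set.uIcc_of_le Real.pi_nonneg] at hs
      simp [hfun, Real.sin_nonneg_of_nonneg_of_le_pi hs.1 hs.2])]
  simp [mul_comm]

noncomputable def traj (r : ℝ) : ℝ → EuclideanSpace ℝ (Fin 2) :=
  fun t => WithLp.toLp 2 ![r * Real.exp (gfun t) * Real.cos t, -(r * Real.exp (gfun t) * Real.sin t)]

lemma traj_cont (r : ℝ) : Continuous (traj r) := by
  have h1 : Continuous fun t => r * Real.exp (gfun t) * Real.cos t :=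
    ((continuous_const.mul (Real.continuous_exp.comp gfun_cont)).mul Real.continuous_cos)
  have h2 : Continuous fun t => -(r * Real.exp (gfun t) * Real.sin t) :=
    ((continuous_const.mul (Real.continuous_exp.comp gfun_cont)).mul Real.continuous_sin).neg
  have hF : Continuous fun t => (![r * Real.exp (gfun t) * Real.cos t,
      -(r * Real.exp (gfun t) * Real.sin t)] : Fin 2 → ℝ) := by
    apply continuous_pi
    intro i; fin_cases i
    · exact h1
    · exact h2
  exact (PiLp.continuousLinearEquiv 2 ℝ (fun _ : Fin 2 => ℝ)).symm.continuous.comp hF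

lemma traj_ne_zero {r : ℝ} (hr : r ≠ 0) (t : ℝ) : traj r t ≠ 0 := by
  intro h
  have h0 : r * Real.exp (gfun t) * Real.cos t = 0 := congrArg (fun v : EuclideanSpace ℝ (Fin 2) => v 0) h
  have h1 : -(r * Real.exp (gfun t) * Real.sin t) = 0 := congrArg (fun v : EuclideanSpace ℝ (Fin 2) => v 1) h
  have hre : r * Real.exp (gfun t) ≠ 0 := mul_ne_zero hr (Real.exp_ne_zero _)
  have hc : Real.cos t = 0 := by
    rcases mul_eq_zero.1 h0 with h' | h'; exact absurd h' hre; exact h'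
  have hs : Real.sin t = 0 := by
    rw [neg_eq_zero] at h1
    rcases mul_eq_zero.1 h1 with h' | h'; exact absurd h' hre; exact h'
  have := Real.sin_sq_add_cos_sq t
  rw [hs, hc] at this; norm_num at this

lemma traj_deriv {r : ℝ} (t : ℝ) (ht : Real.sin t ≠ 0) :
    HasDerivAt (traj r)
      (WithLp.toLp 2 ![r * Real.exp (gfun t) * (hfun t * Real.cos t - Real.sin t),
        -(r * Real.exp (gfun t) * (hfun t * Real.sin t + Real.cos t))] :
        EuclideanSpace ℝ (Fin 2)) t := by
  have hg := gfun_deriv ht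
  have hx : HasDerivAt (fun t => r * Real.exp (gfun t) * Real.cos t)
      (r * Real.exp (gfun t) * (hfun t * Real.cos t - Real.sin t)) t := by
    have := (hg.exp.const_mul r).mul (Real.hasDerivAt_cos t)
    refine this.congr_deriv ?_
    ring
  have hy : HasDerivAt (fun t => -(r * Real.exp (gfun t) * Real.sin t))
      (-(r * Real.exp (gfun t) * (hfun t * Real.sin t + Real.cos t))) t := by
    have := ((hg.exp.const_mul r).mul (Real.hasDerivAt_sin t)).neg
    refine this.congr_deriv ?_
    ring
  have hpi : HasDerivAt (fun t => (![r * Real.exp (gfun t) * Real.cos t,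
      -(r * Real.exp (gfun t) * Real.sin t)] : Fin 2 → ℝ))
      ![r * Real.exp (gfun t) * (hfun t * Real.cos t - Real.sin t),
        -(r * Real.exp (gfun t) * (hfun t * Real.sin t + Real.cos t))] t := by
    rw [hasDerivAt_pi]
    intro i; fin_cases i
    · exact hx
    · exact hy
  exact ((PiLp.continuousLinearEquiv 2 ℝ (fun _ : Fin 2 => ℝ)).symm.hasFDerivAt).comp_hasDerivAt t hpi

lemma traj_mode {r : ℝ} (hr : 0 < r) (t : ℝ) (ht : Real.sin t ≠ 0) :
    ∃ v : EuclideanSpace ℝ (Fin 2), HasDerivAt (traj r) v t ∧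
      ((0 ≤ traj r t 1 ∧ v = stmt13A1 (traj r t)) ∨
       (traj r t 1 ≤ 0 ∧ v = stmt13A2 (traj r t))) := by
  refine ⟨_, traj_deriv t ht, ?_⟩
  have hre : 0 < r * Real.exp (gfun t) := mul_pos hr (Real.exp_pos _)
  rcases ht.lt_or_gt with h | h
  · left
    constructor
    · show 0 ≤ -(r * Real.exp (gfun t) * Real.sin t)
      nlinarith
    · have hh : hfun t = -0.2 := by simp [hfun, not_le.2 h]
      ext i
      fin_cases i <;>
        simp [stmt13A1, traj, hh, Matrix.cons_val_zero, Matrix.cons_val_one, Matrix.head_cons, show (1.0:ℝ) = 1 by norm_num] <;>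
        ring
  · right
    constructor
    · show -(r * Real.exp (gfun t) * Real.sin t) ≤ 0
      nlinarith
    · have hh : hfun t = 0.01 := by simp [hfun, h.le]
      ext i
      fin_cases i <;>
        simp [stmt13A2, traj, hh, Matrix.cons_val_zero, Matrix.cons_val_one, Matrix.head_cons, show (1.0:ℝ) = 1 by norm_num] <;>
        ring

noncomputable def vecx (x : ℝ) : EuclideanSpace ℝ (Fin 2) := WithLp.toLp 2 ![x, 0]

lemma sin_zero_null : volume {t : ℝ | Real.sin t = 0} = 0 := by
  have hsub : {t : ℝ | Real.sin t = 0} ⊆ Set.range (fun n : ℤ => (n : ℝ) * Real.pi) := by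
    intro t ht
    obtain ⟨n, hn⟩ := Real.sin_eq_zero_iff.1 ht
    exact ⟨n, hn⟩
  exact measure_mono_null hsub ((Set.countable_range _).measure_zero _)

lemma bridge (p : MvPolynomial (Fin 2) ℝ) (x : ℝ) :
    Polynomial.eval x (MvPolynomial.eval₂ Polynomial.C
      (fun i : Fin 2 => if i = 0 then Polynomial.X else 0) p) =
    MvPolynomial.eval ![x, 0] p := by
  rw [MvPolynomial.polynomial_eval_eval₂]
  have h1 : (Polynomial.evalRingHom x).comp Polynomial.C = RingHom.id ℝ := by
    ext a; simp
  rw [h1, MvPolynomial.eval₂_id]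
  have h2 : (fun s : Fin 2 => Polynomial.eval x (if s = 0 then Polynomial.X else 0)) = ![x, 0] := by
    funext s; fin_cases s <;> simp
  rw [h2]

lemma poly_contra (q : Polynomial ℝ) (c : ℝ) (hc : 1 < c)
    (htop : Tendsto (fun x => q.eval x) atTop atTop)
    (hbot : Tendsto (fun x => q.eval x) atBot atTop)
    (hkey : ∀ r : ℝ, 0 < r → q.eval (-(c * r)) < q.eval r) : False := by
  have hcne : (-c : ℝ) ≠ 0 := by intro h; rw [neg_eq_zero] at h; linarith
  set Q1 : Polynomial ℝ := q.comp (C (-c) * X) with hQ1def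
  have hQ1eval : ∀ x : ℝ, Q1.eval x = q.eval (-(c * x)) := by
    intro x; simp [hQ1def, eval_comp]
  have htop1 : Tendsto (fun x => Q1.eval x) atTop atTop := by
    have h2 : Tendsto (fun x : ℝ => c * x) atTop atTop :=
      Tendsto.const_mul_atTop (by linarith) tendsto_id
    have h3 : Tendsto (fun x : ℝ => -(c * x)) atTop atBot :=
      tendsto_neg_atTop_atBot.comp h2
    have := hbot.comp h3
    simpa [Function.comp_def, hQ1eval] using this
  obtain ⟨hdq, haq⟩ := (q.tendsto_atTop_iff_leadingCoeff_nonneg).1 htop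
  obtain ⟨hdQ1, haQ1⟩ := (Q1.tendsto_atTop_iff_leadingCoeff_nonneg).1 htop1
  have hq0 : q ≠ 0 := fun h => by simp [h] at hdq
  have ha : 0 < q.leadingCoeff := haq.lt_of_ne' (leadingCoeff_ne_zero.2 hq0)
  set d := q.natDegree with hd
  have hd1 : 0 < d := natDegree_pos_iff_degree_pos.2 hdq
  have hlin : (C (-c) * X).natDegree = 1 := natDegree_C_mul_X _ hcne
  have hQ1deg : Q1.natDegree = d := by
    rw [hQ1def, natDegree_comp, hlin, mul_one]
  have hQ1lc : Q1.leadingCoeff = q.leadingCoeff * (-c) ^ d := by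
    rw [hQ1def, leadingCoeff_comp (by rw [hlin]; exact one_ne_zero), leadingCoeff_C_mul_X]
  have heven : Even d := by
    by_contra hodd
    rw [Nat.not_even_iff_odd] at hodd
    have : (-c : ℝ) ^ d < 0 := hodd.pow_neg (by linarith)
    nlinarith [hQ1lc ▸ haQ1]
  have hpow : (-c : ℝ) ^ d = c ^ d := heven.neg_pow c
  have hcd : 1 < c ^ d := one_lt_pow₀ hc hd1.ne'
  set Q : Polynomial ℝ := Q1 - q with hQdef
  have hQcoeff : Q.coeff d = q.leadingCoeff * c ^ d - q.leadingCoeff := by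
    rw [hQdef, coeff_sub]
    have h1 : Q1.coeff d = Q1.leadingCoeff := by rw [← hQ1deg]; rfl
    have h2 : q.coeff d = q.leadingCoeff := rfl
    rw [h1, h2, hQ1lc, hpow]
  have hQcpos : 0 < Q.coeff d := by rw [hQcoeff]; nlinarith
  have hQdeg : Q.natDegree = d :=
    le_antisymm (le_trans (natDegree_sub_le _ _) (by rw [hQ1deg]; simp [hd]))
      (le_natDegree_of_ne_zero hQcpos.ne')
  have hQlc : 0 < Q.leadingCoeff := by rwa [leadingCoeff, hQdeg]
  have hQdegpos : 0 < Q.degree := natDegree_pos_iff_degree_pos.1 (hQdeg ▸ hd1)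
  have hQtop : Tendsto (fun x => Q.eval x) atTop atTop :=
    Q.tendsto_atTop_of_leadingCoeff_nonneg hQdegpos hQlc.le
  obtain ⟨x, hx1, hx0⟩ := ((hQtop.eventually_ge_atTop 1).and (eventually_gt_atTop (0:ℝ))).exists
  have hev : Q.eval x = q.eval (-(c * x)) - q.eval x := by
    rw [hQdef, eval_sub, hQ1eval]
  have := hkey x hx0
  linarith

/-- the planar hybrid system `ẋ ∈ {A₁x if x₂ ≥ 0, A₂x if x₂ ≤ 0}`
admits no polynomial Lyapunov function (positive definite, radially unbounded,
strictly decreasing along every nonzero trajectory). -/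
theorem no_polynomial_lyapunov :
    ¬ ∃ p : MvPolynomial (Fin 2) ℝ,
      (MvPolynomial.eval (fun _ => (0 : ℝ)) p = 0) ∧
      (∀ x : EuclideanSpace ℝ (Fin 2), x ≠ 0 →
        0 < MvPolynomial.eval (fun i => x i) p) ∧
      -- radially unbounded
      (∀ M : ℝ, ∃ R : ℝ, ∀ x : EuclideanSpace ℝ (Fin 2), R ≤ ‖x‖ →
        M ≤ MvPolynomial.eval (fun i => x i) p) ∧
      -- strictly decreasing along every nonzero trajectory
      (∀ ξ : ℝ → EuclideanSpace ℝ (Fin 2), Continuous ξ →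
        (∀ᵐ t ∂MeasureTheory.volume, 0 ≤ t →
          ∃ v : EuclideanSpace ℝ (Fin 2), HasDerivAt ξ v t ∧
            ((0 ≤ ξ t 1 ∧ v = stmt13A1 (ξ t)) ∨ (ξ t 1 ≤ 0 ∧ v = stmt13A2 (ξ t)))) →
        (∀ t : ℝ, 0 ≤ t → ξ t ≠ 0) →
        StrictAntiOn (fun t => MvPolynomial.eval (fun i => ξ t i) p) (Set.Ici 0)) := by
  rintro ⟨p, -, -, hrad, hdec⟩
  set c := Real.exp (0.01 * Real.pi) with hcdef
  have hc : 1 < c := by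
    rw [hcdef]
    have : (0:ℝ) < 0.01 * Real.pi := by positivity
    calc (1:ℝ) = Real.exp 0 := by simp
    _ < Real.exp (0.01 * Real.pi) := Real.exp_lt_exp.2 this
  have key : ∀ r : ℝ, 0 < r →
      MvPolynomial.eval ![-(c * r), 0] p < MvPolynomial.eval ![r, 0] p := by
    intro r hr
    have hae : ∀ᵐ t ∂volume, 0 ≤ t →
        ∃ v : EuclideanSpace ℝ (Fin 2), HasDerivAt (traj r) v t ∧
          ((0 ≤ traj r t 1 ∧ v = stmt13A1 (traj r t)) ∨
           (traj r t 1 ≤ 0 ∧ v = stmt13A2 (traj r t))) := by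
      have hns : ∀ᵐ t ∂(volume : Measure ℝ), Real.sin t ≠ 0 := by
        rw [MeasureTheory.ae_iff]
        simpa using sin_zero_null
      filter_upwards [hns] with t ht _
      exact traj_mode hr t ht
    have hmono := hdec (traj r) (traj_cont r) hae (fun t _ => traj_ne_zero hr.ne' t)
    have hlt := hmono (Set.self_mem_Ici) (Set.mem_Ici.2 Real.pi_nonneg) Real.pi_pos
    have e0 : (fun i => traj r 0 i) = ![r, 0] := by
      funext i; fin_cases i <;> simp [traj, gfun_zero]
    have epi : (fun i => traj r Real.pi i) = ![-(c * r), 0] := by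
      funext i; fin_cases i <;> simp [traj, gfun_pi, hcdef] <;> ring
    simp only at hlt
    rw [e0, epi] at hlt
    exact hlt
  set q : Polynomial ℝ := MvPolynomial.eval₂ Polynomial.C
    (fun i : Fin 2 => if i = 0 then Polynomial.X else 0) p with hqdef
  have hqeval : ∀ x : ℝ, q.eval x = MvPolynomial.eval ![x, 0] p := bridge p
  have hnorm : ∀ x : ℝ, ‖vecx x‖ = |x| := by
    intro x
    rw [vecx, EuclideanSpace.norm_eq]
    rw [Fin.sum_univ_two]
    simp [Real.sqrt_sq_eq_abs, sq_abs]
  have htop : Tendsto (fun x => q.eval x) atTop atTop := by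
    rw [tendsto_atTop]
    intro M
    obtain ⟨R, hR⟩ := hrad M
    filter_upwards [eventually_ge_atTop |R|] with x hx
    rw [hqeval]
    have hxnn : (0:ℝ) ≤ x := le_trans (abs_nonneg R) hx
    have hRx : R ≤ ‖vecx x‖ := by
      rw [hnorm, abs_of_nonneg hxnn]
      exact le_trans (le_abs_self R) hx
    exact hR (vecx x) hRx
  have hbot : Tendsto (fun x => q.eval x) atBot atTop := by
    rw [tendsto_atTop]
    intro M
    obtain ⟨R, hR⟩ := hrad M
    filter_upwards [eventually_le_atBot (-|R|)] with x hx
    rw [hqeval]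
    have hxnp : x ≤ 0 := le_trans hx (by simp [abs_nonneg])
    have hRx : R ≤ ‖vecx x‖ := by
      rw [hnorm, abs_of_nonpos hxnp]
      refine le_trans (le_abs_self R) ?_
      linarith
    exact hR (vecx x) hRx
  exact poly_contra q c hc htop hbot (fun r hr => by rw [hqeval, hqeval]; exact key r hr)
end

section
/- Let γ > 0, U ∈ ℝ^{d×d} orthogonal, and consider the piecewise linear system with modes H₁ = {x : (Uᵀx)₁ ≥ 0} with matrix Π₁ = U(𝟙𝟙ᵀ − (d+1)I)Uᵀ and H₂ = {x : (Uᵀx)₁ ≤ 0} with matrix Π_γ = U(𝟙𝟙ᵀ − (d+γ)I)Uᵀ. Then V(x) = ‖Uᵀx‖_∞ is a polyhedral Lyapunov function: V(x) > 0 for x ≠ 0, and for each q ∈ {1,2}, each x ∈ H_q with x ≠ 0, and each maximizing unit coordinate functional σeᵢ (σ ∈ {−1,1}, V(x) = σ·(Uᵀx)ᵢ), one has σ·eᵢᵀ·Uᵀ·Π_{γ̄}·x ≤ −γ̄·V(x) < 0, where γ̄ = 1 if q = 1 and γ̄ = γ if q = 2. -/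
open Matrix

/-- for `γ > 0`, the piecewise linear system with modes
`H₁ = {x : (Uᵀx)₁ ≥ 0}`, matrix `Π₁ = U(𝟙𝟙ᵀ − (d+1)I)Uᵀ`, and
`H₂ = {x : (Uᵀx)₁ ≤ 0}`, matrix `Π_γ = U(𝟙𝟙ᵀ − (d+γ)I)Uᵀ`, admits
`V(x) = ‖Uᵀx‖_∞` as a polyhedral Lyapunov function. (The norm on `Fin d → ℝ`
is the sup norm.) -/
theorem polyhedral_lyapunov_performance_example {d : ℕ} (hd : 0 < d)
    (γ : ℝ) (hγ : 0 < γ)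
    (U : Matrix (Fin d) (Fin d) ℝ) (hU : U ∈ Matrix.orthogonalGroup (Fin d) ℝ)
    (Pi : ℝ → Matrix (Fin d) (Fin d) ℝ)
    (hPi : ∀ g : ℝ, Pi g = U * ((Matrix.of fun _ _ => (1 : ℝ)) - ((d : ℝ) + g) • 1) * Uᵀ) :
    -- V is positive definite
    (∀ x : Fin d → ℝ, x ≠ 0 → 0 < ‖Uᵀ.mulVec x‖) ∧
    -- Lyapunov decrease in each mode, at each maximizing piece σ·eᵢ
    (∀ gbar : ℝ, ∀ x : Fin d → ℝ,
      ((gbar = 1 ∧ 0 ≤ Uᵀ.mulVec x ⟨0, hd⟩) ∨ (gbar = γ ∧ Uᵀ.mulVec x ⟨0, hd⟩ ≤ 0)) →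
      x ≠ 0 →
      ∀ (i : Fin d) (σ : ℝ), (σ = 1 ∨ σ = -1) →
        σ * Uᵀ.mulVec x i = ‖Uᵀ.mulVec x‖ →
        σ * Uᵀ.mulVec ((Pi gbar).mulVec x) i ≤ -gbar * ‖Uᵀ.mulVec x‖ ∧
        -gbar * ‖Uᵀ.mulVec x‖ < 0) := by
  have hst : star U = Uᵀ := by
    simp [Matrix.star_eq_conjTranspose, Matrix.conjTranspose]
    ext i j
    simp [Matrix.map_apply]
  have hUUt : U * Uᵀ = 1 := by
    have := (Matrix.mem_orthogonalGroup_iff (Fin d) ℝ).mp hU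
    exact this
  have hUtU : Uᵀ * U = 1 := by
    have := (Matrix.mem_orthogonalGroup_iff' (Fin d) ℝ).mp hU
    exact this
  have hz_ne : ∀ x : Fin d → ℝ, x ≠ 0 → Uᵀ.mulVec x ≠ 0 := by
    intro x hx h
    apply hx
    have hxx : U.mulVec (Uᵀ.mulVec x) = x := by
      rw [Matrix.mulVec_mulVec, hUUt, Matrix.one_mulVec]
    rw [← hxx, h, Matrix.mulVec_zero]
  constructor
  · intro x hx
    exact norm_pos_iff.mpr (hz_ne x hx)
  · intro gbar x hcase hx i σ hσ hmax
    have hg : 0 < gbar := by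
      rcases hcase with ⟨h, _⟩ | ⟨h, _⟩
      · rw [h]; norm_num
      · rw [h]; exact hγ
    have hVpos : 0 < ‖Uᵀ.mulVec x‖ := norm_pos_iff.mpr (hz_ne x hx)
    set z := Uᵀ.mulVec x with hzdef
    have key : Uᵀ.mulVec ((Pi gbar).mulVec x) i
        = (∑ j, z j) - ((d : ℝ) + gbar) * z i := by
      rw [Matrix.mulVec_mulVec, hPi, show Uᵀ * (U * ((Matrix.of fun _ _ => (1 : ℝ))
          - ((d : ℝ) + gbar) • 1) * Uᵀ)
          = ((Matrix.of fun _ _ => (1 : ℝ)) - ((d : ℝ) + gbar) • 1) * Uᵀ by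
        rw [← Matrix.mul_assoc, ← Matrix.mul_assoc, hUtU, Matrix.one_mul]]
      rw [← Matrix.mulVec_mulVec, Matrix.sub_mulVec, Matrix.smul_mulVec,
        Matrix.one_mulVec, ← hzdef]
      simp only [_root_.Pi.sub_apply, _root_.Pi.smul_apply, smul_eq_mul]
      congr 1
      simp [Matrix.mulVec, dotProduct]
    have hbound : ∀ j, σ * z j ≤ ‖z‖ := by
      intro j
      calc σ * z j ≤ |σ * z j| := le_abs_self _
        _ = |z j| := by rcases hσ with h | h <;> simp [h, abs_mul]
        _ ≤ ‖z‖ := by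
          have := norm_le_pi_norm z j
          simpa [Real.norm_eq_abs] using this
    constructor
    · rw [key]
      have hsum : σ * (∑ j, z j) ≤ (d : ℝ) * ‖z‖ := by
        rw [Finset.mul_sum]
        calc (∑ j, σ * z j) ≤ ∑ _j : Fin d, ‖z‖ :=
              Finset.sum_le_sum fun j _ => hbound j
          _ = (d : ℝ) * ‖z‖ := by simp [mul_comm]
      have : σ * ((∑ j, z j) - ((d : ℝ) + gbar) * z i)
          = σ * (∑ j, z j) - ((d : ℝ) + gbar) * (σ * z i) := by ring
      rw [this, hmax]
      nlinarith [hsum]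
    · have : -gbar * ‖z‖ < 0 := by
        have := mul_pos hg hVpos
        linarith
      exact this
end

section
/- Let 𝒱 ⊆ ℝ^d be finite with V(x) = max_{c∈𝒱} cᵀx, and suppose V(x) > 0 for all x ≠ 0 (condition C1) and for all x ≠ 0, v ∈ ℱ(x) and c ∈ 𝒱(x), cᵀv < 0 (condition C2), where ℱ(x) = {A_q x : q ∈ Q, x ∈ H_q} is a continuous, compact-valued, positively homogeneous set-valued map. Then there exist ε ≥ 1, θ > 0 and δ > 0 such that V is (ε,θ,δ)-robust: (D1) V(x) ≥ (Vmax/ε)‖x‖ for all x, and (D2) cᵀv ≤ (1/θ)(V(x) − cᵀx) − δ·Vmax·‖x‖ for all x ∈ ℝ^d, v ∈ ℱ(x), c ∈ 𝒱. -/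
open scoped RealInnerProductSpace

private lemma key_compact {X : Type*} [TopologicalSpace X] [T2Space X]
    (K : Set X) (hK : IsCompact K) (g h : X → ℝ)
    (hg : Continuous g) (hh : Continuous h)
    (hh0 : ∀ x ∈ K, 0 ≤ h x)
    (hneg : ∀ x ∈ K, h x = 0 → g x < 0) :
    ∃ T δ : ℝ, 0 < T ∧ 0 < δ ∧ ∀ x ∈ K, g x ≤ T * h x - δ := by
  rcases K.eq_empty_or_nonempty with rfl | hKne
  · exact ⟨1, 1, one_pos, one_pos, fun x hx => hx.elim⟩
  obtain ⟨xM, hxM, hMx⟩ := hK.exists_isMaxOn hKne hg.continuousOn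
  have hM : ∀ y ∈ K, g y ≤ g xM := fun y hy => hMx hy
  set M := g xM with hMdef
  set D : Set X := K ∩ h ⁻¹' {0} with hD
  have hDc : IsCompact D :=
    hK.of_isClosed_subset (hK.isClosed.inter (isClosed_singleton.preimage hh))
      Set.inter_subset_left
  rcases D.eq_empty_or_nonempty with hDe | hDne
  · -- h > 0 on K
    obtain ⟨xb, hxb, hbx⟩ := hK.exists_isMinOn hKne hh.continuousOn
    have hb : ∀ y ∈ K, h xb ≤ h y := fun y hy => hbx hy
    have hβ : 0 < h xb := by
      rcases lt_or_eq_of_le (hh0 xb hxb) with h' | h'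
      · exact h'
      · exfalso
        have : xb ∈ D := ⟨hxb, by simpa using h'.symm⟩
        simp [hDe] at this
    refine ⟨max 1 ((M + 1) / h xb), 1, lt_of_lt_of_le one_pos (le_max_left _ _), one_pos, ?_⟩
    intro x hx
    have h1 : h xb ≤ h x := hb x hx
    have h2 : g x ≤ M := hM x hx
    have hT : (M + 1) / h xb ≤ max 1 ((M + 1) / h xb) := le_max_right _ _
    have hT0 : (0:ℝ) ≤ max 1 ((M + 1) / h xb) := le_trans zero_le_one (le_max_left _ _)
    have h3 : max 1 ((M + 1) / h xb) * h xb ≤ max 1 ((M + 1) / h xb) * h x :=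
      mul_le_mul_of_nonneg_left h1 hT0
    have h4 : (M + 1) / h xb * h xb ≤ max 1 ((M + 1) / h xb) * h xb :=
      mul_le_mul_of_nonneg_right hT (le_of_lt hβ)
    have h5 : (M + 1) / h xb * h xb = M + 1 := div_mul_cancel₀ _ (ne_of_gt hβ)
    linarith
  · obtain ⟨xg, hxg, hγx⟩ := hDc.exists_isMaxOn hDne hg.continuousOn
    have hγ : ∀ y ∈ D, g y ≤ g xg := fun y hy => hγx hy
    have hγneg : g xg < 0 := hneg xg hxg.1 hxg.2
    set γ := g xg with hγdef
    set E : Set X := K ∩ g ⁻¹' Set.Ici (γ / 2) with hE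
    have hEc : IsCompact E :=
      hK.of_isClosed_subset (hK.isClosed.inter (isClosed_Ici.preimage hg))
        Set.inter_subset_left
    rcases E.eq_empty_or_nonempty with hEe | hEne
    · refine ⟨1, -γ / 2, one_pos, by linarith, ?_⟩
      intro x hx
      have hgx : g x < γ / 2 := by
        by_contra h'
        have : x ∈ E := ⟨hx, le_of_not_gt h'⟩
        simp [hEe] at this
      have := hh0 x hx
      linarith
    · obtain ⟨xb, hxb, hbx⟩ := hEc.exists_isMinOn hEne hh.continuousOn
      have hb : ∀ y ∈ E, h xb ≤ h y := fun y hy => hbx hy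
      have hβ : 0 < h xb := by
        rcases lt_or_eq_of_le (hh0 xb hxb.1) with h' | h'
        · exact h'
        · exfalso
          have hx0 : g xb < 0 := hneg xb hxb.1 h'.symm
          have h6 : g xb ≤ γ := hγ xb ⟨hxb.1, by simpa using h'.symm⟩
          have h7 : γ / 2 ≤ g xb := hxb.2
          linarith
      refine ⟨max 1 ((M - γ / 2) / h xb), -γ / 2,
        lt_of_lt_of_le one_pos (le_max_left _ _), by linarith, ?_⟩
      intro x hx
      have hT0 : (0:ℝ) ≤ max 1 ((M - γ / 2) / h xb) := le_trans zero_le_one (le_max_left _ _)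
      by_cases hxE : x ∈ E
      · have h1 : h xb ≤ h x := hb x hxE
        have h2 : g x ≤ M := hM x hx
        have hT : (M - γ / 2) / h xb ≤ max 1 ((M - γ / 2) / h xb) := le_max_right _ _
        have h3 : max 1 ((M - γ / 2) / h xb) * h xb ≤ max 1 ((M - γ / 2) / h xb) * h x :=
          mul_le_mul_of_nonneg_left h1 hT0
        have h4 : (M - γ / 2) / h xb * h xb ≤ max 1 ((M - γ / 2) / h xb) * h xb :=
          mul_le_mul_of_nonneg_right hT (le_of_lt hβ)
        have h5 : (M - γ / 2) / h xb * h xb = M - γ / 2 := div_mul_cancel₀ _ (ne_of_gt hβ)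
        linarith
      · have hgx : g x < γ / 2 := by
          by_contra h'
          exact hxE ⟨hx, le_of_not_gt h'⟩
        have h6 : 0 ≤ h x := hh0 x hx
        nlinarith [mul_nonneg hT0 h6]

/-- Theorem 8, "only if" direction: if the polyhedral function
`V(x) = max_{c∈𝒱} cᵀx` satisfies (C1) and (C2) for the system
`ℱ(x) = {A_q x : q ∈ Q, x ∈ H_q}` (finitely many modes, closed conic regions),
then there exist `ε ≥ 1`, `θ > 0`, `δ > 0` such that `V` is
`(ε,θ,δ)`-robust, i.e. (D1) and (D2) hold. -/
theorem lyapunov_implies_robust {d : ℕ} {Q : Type*} [Fintype Q]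
    (H : Q → Set (EuclideanSpace ℝ (Fin d)))
    (hHclosed : ∀ q, IsClosed (H q))
    (hHcone : ∀ q, ∀ x ∈ H q, ∀ t : ℝ, 0 ≤ t → t • x ∈ H q)
    (A : Q → EuclideanSpace ℝ (Fin d) →L[ℝ] EuclideanSpace ℝ (Fin d))
    (𝒱 : Finset (EuclideanSpace ℝ (Fin d))) (h𝒱 : 𝒱.Nonempty)
    (V : EuclideanSpace ℝ (Fin d) → ℝ)
    (hV : ∀ x, V x = 𝒱.sup' h𝒱 fun c => ⟪c, x⟫)
    (Vmax : ℝ) (hVmax : Vmax = 𝒱.sup' h𝒱 fun c => ‖c‖)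
    (hVmaxPos : 0 < Vmax)
    -- (C1)
    (hC1 : ∀ x : EuclideanSpace ℝ (Fin d), x ≠ 0 → 0 < V x)
    -- (C2)
    (hC2 : ∀ x : EuclideanSpace ℝ (Fin d), x ≠ 0 → ∀ q : Q, x ∈ H q →
      ∀ c ∈ 𝒱, ⟪c, x⟫ = V x → ⟪c, A q x⟫ < 0) :
    ∃ ε θ δ : ℝ, 1 ≤ ε ∧ 0 < θ ∧ 0 < δ ∧
      -- (D1)
      (∀ x : EuclideanSpace ℝ (Fin d), V x ≥ ε⁻¹ * Vmax * ‖x‖) ∧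
      -- (D2)
      (∀ x : EuclideanSpace ℝ (Fin d), ∀ q : Q, x ∈ H q → ∀ c ∈ 𝒱,
        ⟪c, A q x⟫ ≤ θ⁻¹ * (V x - ⟪c, x⟫) - δ * Vmax * ‖x‖) := by
  classical
  -- basic facts about V
  have hVcont : Continuous V := by
    have h1 : Continuous fun x : EuclideanSpace ℝ (Fin d) => 𝒱.sup' h𝒱 fun c => ⟪c, x⟫ :=
      Continuous.finset_sup'_apply h𝒱 fun c _ => continuous_const.inner continuous_id
    exact (funext hV : V = _) ▸ h1
  have hV0 : V 0 = 0 := by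
    rw [hV]
    simp
  have hVhom : ∀ t : ℝ, 0 ≤ t → ∀ x : EuclideanSpace ℝ (Fin d), V (t • x) = t * V x := by
    intro t ht x
    rw [hV, hV]
    rw [Finset.comp_sup'_eq_sup'_comp h𝒱 (fun r => t * r)
      (fun a b => mul_max_of_nonneg a b ht)]
    congr 1
    funext c
    simp only [Function.comp_apply]
    exact real_inner_smul_right c x t
  have hVle : ∀ x : EuclideanSpace ℝ (Fin d), V x ≤ Vmax * ‖x‖ := by
    intro x
    rw [hV]
    apply Finset.sup'_le
    intro c hc
    calc ⟪c, x⟫ ≤ ‖c‖ * ‖x‖ := real_inner_le_norm c x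
      _ ≤ Vmax * ‖x‖ := by
          apply mul_le_mul_of_nonneg_right _ (norm_nonneg x)
          rw [hVmax]; exact Finset.le_sup' (fun c => ‖c‖) hc
  have hVsub : ∀ x : EuclideanSpace ℝ (Fin d), ∀ c ∈ 𝒱, ⟪c, x⟫ ≤ V x := by
    intro x c hc
    rw [hV]; exact Finset.le_sup' (fun c => (⟪c, x⟫ : ℝ)) hc
  -- handle the degenerate case where every vector is zero
  by_cases hdeg : ∀ x : EuclideanSpace ℝ (Fin d), x = 0
  · refine ⟨1, 1, 1, le_refl 1, one_pos, one_pos, ?_, ?_⟩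
    · intro x; rw [hdeg x]; simp [hV0]
    · intro x q hx c hc; rw [hdeg x]; simp [hV0]
  push_neg at hdeg
  obtain ⟨x₀, hx₀⟩ := hdeg
  have hsphne : (Metric.sphere (0:EuclideanSpace ℝ (Fin d)) 1).Nonempty := by
    refine ⟨‖x₀‖⁻¹ • x₀, ?_⟩
    simp [norm_smul, norm_ne_zero_iff.mpr hx₀,
      inv_mul_cancel₀ (norm_ne_zero_iff.mpr hx₀)]
  have hsphc : IsCompact (Metric.sphere (0:EuclideanSpace ℝ (Fin d)) 1) := isCompact_sphere 0 1
  -- D1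
  obtain ⟨xm, hxm, hmx⟩ := hsphc.exists_isMinOn hsphne hVcont.continuousOn
  have hm : ∀ y ∈ Metric.sphere (0:EuclideanSpace ℝ (Fin d)) 1, V xm ≤ V y := fun y hy => hmx hy
  set m := V xm with hmdef
  have hxmne : xm ≠ 0 := by
    intro h; rw [h] at hxm; simp at hxm
  have hmpos : 0 < m := hC1 xm hxmne
  have hmle : m ≤ Vmax := by
    have := hVle xm
    rw [mem_sphere_zero_iff_norm.mp hxm] at this
    simpa using this
  have hD1 : ∀ x : EuclideanSpace ℝ (Fin d), V x ≥ (Vmax / m)⁻¹ * Vmax * ‖x‖ := by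
    intro x
    have hcoef : (Vmax / m)⁻¹ * Vmax = m := by
      field_simp
    rw [hcoef]
    rcases eq_or_ne x 0 with rfl | hxne
    · simp [hV0]
    · have hnx : (0:ℝ) < ‖x‖ := norm_pos_iff.mpr hxne
      have hu : ‖x‖⁻¹ • x ∈ Metric.sphere (0:EuclideanSpace ℝ (Fin d)) 1 := by
        simp [norm_smul, inv_mul_cancel₀ (ne_of_gt hnx), abs_of_pos (inv_pos.mpr hnx)]
      have h1 : m ≤ V (‖x‖⁻¹ • x) := hm _ hu
      have h2 : V (‖x‖⁻¹ • x) = ‖x‖⁻¹ * V x := hVhom _ (le_of_lt (inv_pos.mpr hnx)) x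
      rw [h2] at h1
      calc m * ‖x‖ ≤ (‖x‖⁻¹ * V x) * ‖x‖ := mul_le_mul_of_nonneg_right h1 (le_of_lt hnx)
        _ = V x := by field_simp
  have hε1 : (1:ℝ) ≤ max 1 (Vmax / m) := le_max_left _ _
  have hD1' : ∀ x : EuclideanSpace ℝ (Fin d), V x ≥ (max 1 (Vmax / m))⁻¹ * Vmax * ‖x‖ := by
    intro x
    calc (max 1 (Vmax / m))⁻¹ * Vmax * ‖x‖ ≤ (Vmax / m)⁻¹ * Vmax * ‖x‖ := by
          apply mul_le_mul_of_nonneg_right _ (norm_nonneg x)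
          apply mul_le_mul_of_nonneg_right _ (le_of_lt hVmaxPos)
          exact inv_anti₀ (div_pos hVmaxPos hmpos) (le_max_right _ _)
      _ ≤ V x := hD1 x
  -- D2
  have hkey : ∀ (q : Q) (c : EuclideanSpace ℝ (Fin d)), ∃ T δ : ℝ, 0 < T ∧ 0 < δ ∧ (c ∈ 𝒱 →
      ∀ x ∈ H q ∩ Metric.sphere (0:EuclideanSpace ℝ (Fin d)) 1,
        ⟪c, A q x⟫ ≤ T * (V x - ⟪c, x⟫) - δ) := by
    intro q c
    by_cases hc : c ∈ 𝒱
    · obtain ⟨T, δ, hT, hδ, hb⟩ := key_compact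
        (H q ∩ Metric.sphere (0:EuclideanSpace ℝ (Fin d)) 1)
        (hsphc.of_isClosed_subset ((hHclosed q).inter Metric.isClosed_sphere)
          Set.inter_subset_right)
        (fun x => ⟪c, A q x⟫) (fun x => V x - ⟪c, x⟫)
        (continuous_const.inner ((A q).continuous))
        (hVcont.sub (continuous_const.inner continuous_id))
        (fun x hx => sub_nonneg.mpr (hVsub x c hc))
        (fun x hx h0 => by
          have hxne : x ≠ 0 := by
            intro h; rw [h] at hx; simpa using hx.2
          exact hC2 x hxne q hx.1 c hc (by linarith [sub_eq_zero.mp h0]))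
      exact ⟨T, δ, hT, hδ, fun _ => hb⟩
    · exact ⟨1, 1, one_pos, one_pos, fun h => absurd h hc⟩
  choose T δ hT hδ hbd using hkey
  by_cases hQ : Nonempty Q
  · set P : Finset (Q × EuclideanSpace ℝ (Fin d)) := Finset.univ ×ˢ 𝒱 with hP
    have hPne : P.Nonempty := Finset.Nonempty.product Finset.univ_nonempty h𝒱
    set Tm := P.sup' hPne (fun p => T p.1 p.2) with hTm
    set δm := P.inf' hPne (fun p => δ p.1 p.2) with hδm
    have hTmpos : 0 < Tm := by
      obtain ⟨p, hp⟩ := hPne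
      exact lt_of_lt_of_le (hT p.1 p.2) (Finset.le_sup' (fun p => T p.1 p.2) hp)
    have hδmpos : 0 < δm := by
      rw [hδm, Finset.lt_inf'_iff]
      exact fun p _ => hδ p.1 p.2
    refine ⟨max 1 (Vmax / m), Tm⁻¹, δm / Vmax, hε1, inv_pos.mpr hTmpos,
      div_pos hδmpos hVmaxPos, hD1', ?_⟩
    intro x q hx c hc
    rw [inv_inv]
    have hδVm : δm / Vmax * Vmax = δm := div_mul_cancel₀ _ (ne_of_gt hVmaxPos)
    rcases eq_or_ne x 0 with rfl | hxne
    · simp [hV0]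
    · have hnx : (0:ℝ) < ‖x‖ := norm_pos_iff.mpr hxne
      set u : EuclideanSpace ℝ (Fin d) := ‖x‖⁻¹ • x with hu
      have huS : u ∈ Metric.sphere (0:EuclideanSpace ℝ (Fin d)) 1 := by
        simp [hu, norm_smul, inv_mul_cancel₀ (ne_of_gt hnx), abs_of_pos (inv_pos.mpr hnx)]
      have huH : u ∈ H q := hHcone q x hx _ (le_of_lt (inv_pos.mpr hnx))
      have hp : (q, c) ∈ P := Finset.mem_product.mpr ⟨Finset.mem_univ q, hc⟩
      have hb1 : ⟪c, A q u⟫ ≤ T q c * (V u - ⟪c, u⟫) - δ q c := hbd q c hc u ⟨huH, huS⟩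
      have hVu0 : 0 ≤ V u - ⟪c, u⟫ := sub_nonneg.mpr (hVsub u c hc)
      have hb2 : ⟪c, A q u⟫ ≤ Tm * (V u - ⟪c, u⟫) - δm := by
        have h1 : T q c * (V u - ⟪c, u⟫) ≤ Tm * (V u - ⟪c, u⟫) :=
          mul_le_mul_of_nonneg_right (Finset.le_sup' (fun p => T p.1 p.2) hp) hVu0
        have h2 : δm ≤ δ q c := Finset.inf'_le (fun p => δ p.1 p.2) hp
        linarith
      have hxu : x = ‖x‖ • u := by
        rw [hu, smul_smul, mul_inv_cancel₀ (ne_of_gt hnx), one_smul]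
      have e1 : ⟪c, A q x⟫ = ‖x‖ * ⟪c, A q u⟫ := by
        conv_lhs => rw [hxu]
        rw [map_smul, real_inner_smul_right]
      have e2 : V x = ‖x‖ * V u := by
        conv_lhs => rw [hxu]
        exact hVhom _ (norm_nonneg x) u
      have e3 : ⟪c, x⟫ = ‖x‖ * ⟪c, u⟫ := by
        conv_lhs => rw [hxu]
        exact real_inner_smul_right c u ‖x‖
      rw [e1, e2, e3, hδVm]
      calc ‖x‖ * ⟪c, A q u⟫ ≤ ‖x‖ * (Tm * (V u - ⟪c, u⟫) - δm) :=
            mul_le_mul_of_nonneg_left hb2 (le_of_lt hnx)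
        _ = Tm * (‖x‖ * V u - ‖x‖ * ⟪c, u⟫) - δm * ‖x‖ := by ring
  · refine ⟨max 1 (Vmax / m), 1, 1, hε1, one_pos, one_pos, hD1', ?_⟩
    intro x q hx c hc
    exact absurd ⟨q⟩ hQ
end

section
/- For a polyhedral function V(x) = max_{c∈𝒱} cᵀx and any x ∈ ℝ^d, there exists x' ≠ 0 with V(x') ≤ 0 or (∃ c ∈ 𝒱(x'), q with x' ∈ H_q and cᵀA_q x' ≥ 0) if and only if one of the following finitely many linear feasibility problems is feasible: (i) ∃ x with cᵀx ≤ 0 for all c ∈ 𝒱 and ‖x‖ ≥ 1; or (ii) for some c ∈ 𝒱 and q ∈ Q: ∃ x ∈ H_q with cᵀx = 1, bᵀx ≤ 1 for all b ∈ 𝒱, and cᵀA_q x ≥ 0. -/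
open scoped RealInnerProductSpace

/-- soundness and completeness of the verifier: a counterexample
to the Lyapunov conditions for a polyhedral function `V` exists iff one of the
finitely many linear feasibility problems (i), (ii) of the verifier is
feasible. -/
theorem verifier_sound_complete {d : ℕ} {Q : Type*}
    (H : Q → Set (EuclideanSpace ℝ (Fin d)))
    (hHcone : ∀ q, ∀ x ∈ H q, ∀ t : ℝ, 0 < t → t • x ∈ H q)
    (A : Q → EuclideanSpace ℝ (Fin d) →L[ℝ] EuclideanSpace ℝ (Fin d))
    (𝒱 : Finset (EuclideanSpace ℝ (Fin d))) (h𝒱 : 𝒱.Nonempty)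
    (V : EuclideanSpace ℝ (Fin d) → ℝ)
    (hV : ∀ x, V x = 𝒱.sup' h𝒱 fun c => ⟪c, x⟫) :
    (∃ x' : EuclideanSpace ℝ (Fin d), x' ≠ 0 ∧
        (V x' ≤ 0 ∨ ∃ c ∈ 𝒱, ⟪c, x'⟫ = V x' ∧ ∃ q : Q, x' ∈ H q ∧ 0 ≤ ⟪c, A q x'⟫)) ↔
    ((∃ x : EuclideanSpace ℝ (Fin d), (∀ c ∈ 𝒱, ⟪c, x⟫ ≤ 0) ∧ 1 ≤ ‖x‖) ∨
      (∃ c ∈ 𝒱, ∃ q : Q, ∃ x ∈ H q, ⟪c, x⟫ = 1 ∧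
        (∀ b ∈ 𝒱, ⟪b, x⟫ ≤ 1) ∧ 0 ≤ ⟪c, A q x⟫)) := by
  have hle : ∀ x, ∀ c ∈ 𝒱, ⟪c, x⟫ ≤ V x := by
    intro x c hc
    rw [hV]
    exact Finset.le_sup' (fun c => ⟪c, x⟫) hc
  constructor
  · rintro ⟨x', hx0, hcase⟩
    have hnorm : (0:ℝ) < ‖x'‖ := norm_pos_iff.mpr hx0
    rcases hcase with hV0 | ⟨c, hc, hcV, q, hxH, hA⟩
    · -- V x' ≤ 0: rescale to norm 1
      left
      refine ⟨(‖x'‖⁻¹) • x', ?_, ?_⟩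
      · intro c hc
        have := (hle x' c hc).trans hV0
        rw [inner_smul_right]
        exact mul_nonpos_of_nonneg_of_nonpos (inv_nonneg.mpr hnorm.le) this
      · rw [norm_smul, norm_inv, norm_norm, inv_mul_cancel₀ hnorm.ne']
    · by_cases hVpos : V x' ≤ 0
      · left
        refine ⟨(‖x'‖⁻¹) • x', ?_, ?_⟩
        · intro b hb
          have := (hle x' b hb).trans hVpos
          rw [inner_smul_right]
          exact mul_nonpos_of_nonneg_of_nonpos (inv_nonneg.mpr hnorm.le) this
        · rw [norm_smul, norm_inv, norm_norm, inv_mul_cancel₀ hnorm.ne']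
      · push_neg at hVpos
        right
        have ht : (0:ℝ) < (V x')⁻¹ := inv_pos.mpr hVpos
        refine ⟨c, hc, q, (V x')⁻¹ • x', hHcone q x' hxH _ ht, ?_, ?_, ?_⟩
        · rw [inner_smul_right, hcV, inv_mul_cancel₀ hVpos.ne']
        · intro b hb
          rw [inner_smul_right]
          calc (V x')⁻¹ * ⟪b, x'⟫ ≤ (V x')⁻¹ * V x' :=
                mul_le_mul_of_nonneg_left (hle x' b hb) ht.le
            _ = 1 := inv_mul_cancel₀ hVpos.ne'
        · rw [map_smul, inner_smul_right]
          exact mul_nonneg ht.le hA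
  · rintro (⟨x, hxle, hxn⟩ | ⟨c, hc, q, x, hxH, hcx, hble, hA⟩)
    · refine ⟨x, ?_, Or.inl ?_⟩
      · intro h; rw [h, norm_zero] at hxn; linarith
      · rw [hV]
        exact Finset.sup'_le _ _ fun c hc => hxle c hc
    · have hVx : V x = 1 := by
        have h1 : V x ≤ 1 := by
          rw [hV]; exact Finset.sup'_le _ _ fun b hb => hble b hb
        have h2 : (1:ℝ) ≤ V x := hcx ▸ hle x c hc
        linarith
      refine ⟨x, ?_, Or.inr ⟨c, hc, by rw [hcx, hVx], q, hxH, hA⟩⟩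
      intro h
      rw [h, inner_zero_right] at hcx
      exact one_ne_zero hcx.symm
end
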